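/- For all n ≥ 1, 2n divides Σ_{d | n} φ(n/d) * C(2d, d). -/

import Mathlib

/-!
By Burnside's lemma, `∑ g, #(fixed points of g)` is `m` times the number of orbits of the rotation
action of `ℤ/m` on the `k`-subsets of `ℤ/m`. A rotation `g` of order `q` fixes exactly the
`k`-subsets that are unions of cosets of `⟨g⟩`, so `C(m/q, k/q)` of them when `q ∣ k` and none
otherwise, and `ℤ/m` has `φ q` elements of order `q`. For `m = 2n`, `k = n` the resulting sum is
`∑_{d ∣ n} φ(n/d) C(2d, d)`.
-/

open Finset Pointwise AddAction Nat

section CardEq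

variable {G α : Type*} [AddGroup G] [AddAction G α] [DecidableEq α]

instance Finset.addActionCardEq (k : ℕ) : AddAction G {s : Finset α // s.card = k} where
  vadd g s := ⟨g +ᵥ s.1, by rw [card_vadd_finset, s.2]⟩
  zero_vadd s := Subtype.ext (zero_vadd G s.1)
  add_vadd g h s := Subtype.ext (add_vadd g h s.1)

def fixedByEquivZMultiplesLeStabilizer (g : G) (k : ℕ) :
    fixedBy {s : Finset α // s.card = k} g ≃
      {s : Finset α // s.card = k ∧ AddSubgroup.zmultiples g ≤ stabilizer G s} where
  toFun s := ⟨s.1.1, s.1.2, AddSubgroup.zmultiples_le.2 (congrArg Subtype.val s.2)⟩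
  invFun s := ⟨⟨s.1, s.2.1⟩, Subtype.ext (AddSubgroup.zmultiples_le.1 s.2.2)⟩

end CardEq

theorem card_finset_mul_card_eq {β : Type*} [Finite β] {q : ℕ} (hq : 0 < q) (k : ℕ) :
    Nat.card {t : Finset β // q * t.card = k} =
      if q ∣ k then (Nat.card β).choose (k / q) else 0 := by
  have := Fintype.ofFinite β
  split_ifs with hk
  · obtain ⟨e, rfl⟩ := hk
    rw [Nat.mul_div_cancel_left e hq, Nat.card_eq_fintype_card (α := β),
      ← Fintype.card_finset_len, ← Nat.card_eq_fintype_card]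
    exact Nat.card_congr (Equiv.subtypeEquivRight fun t => Nat.mul_right_inj hq.ne')
  · have : IsEmpty {t : Finset β // q * t.card = k} := ⟨fun t => hk ⟨_, t.2.symm⟩⟩
    exact Nat.card_of_isEmpty

section Quotient

variable {G : Type*} [AddCommGroup G] [Fintype G] (H : AddSubgroup G)
  [DecidableEq (G ⧸ H)]

def finsetPreimageMk (t : Finset (G ⧸ H)) : Finset G := {x | (x : G ⧸ H) ∈ t}

theorem card_finsetPreimageMk (t : Finset (G ⧸ H)) :
    (finsetPreimageMk H t).card = Nat.card H * t.card := by
  have hcoe : (finsetPreimageMk H t : Set G) = QuotientAddGroup.mk ⁻¹' (t : Set (G ⧸ H)) := by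
    ext; simp [finsetPreimageMk]
  rw [← Nat.card_eq_finsetCard, ← Nat.card_eq_finsetCard t, ← Nat.card_prod]
  exact Nat.card_congr
    ((Equiv.setCongr hcoe).trans (QuotientAddGroup.preimageMkEquivAddSubgroupProdSet H t))

theorem finsetPreimageMk_injective : Function.Injective (finsetPreimageMk H) := by
  intro t t' h
  ext y
  induction y using QuotientAddGroup.induction_on with
  | H x => simpa [finsetPreimageMk] using congrArg (x ∈ ·) h

theorem le_stabilizer_iff_mem_range_finsetPreimageMk [DecidableEq G] {s : Finset G} :
    H ≤ stabilizer G s ↔ s ∈ Set.range (finsetPreimageMk H) := by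
  constructor
  · intro hH
    refine ⟨s.image (↑), ?_⟩
    ext x
    simp only [finsetPreimageMk, mem_filter, mem_univ, true_and, mem_image]
    refine ⟨fun ⟨y, hy, hyx⟩ => ?_, fun hx => ⟨x, hx, rfl⟩⟩
    have hmem : -y + x ∈ H := QuotientAddGroup.eq.1 hyx
    rw [← mem_stabilizer_iff.1 (hH hmem)]
    simpa [Finset.mem_vadd_finset] using ⟨y, hy, by abel⟩
  · rintro ⟨t, rfl⟩ h hh
    rw [mem_stabilizer_iff]
    ext x
    rw [← neg_vadd_mem_iff]
    have : ((-h + x : G) : G ⧸ H) = x := QuotientAddGroup.eq.2 (by simpa using hh)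
    simp [finsetPreimageMk, this]

noncomputable def finsetPreimageMkEquiv [DecidableEq G] (k : ℕ) :
    {t : Finset (G ⧸ H) // Nat.card H * t.card = k} ≃
      {s : Finset G // s.card = k ∧ H ≤ stabilizer G s} :=
  Equiv.ofBijective
    (fun t => ⟨finsetPreimageMk H t, (card_finsetPreimageMk H t).trans t.2,
      (le_stabilizer_iff_mem_range_finsetPreimageMk H).2 ⟨t, rfl⟩⟩)
    ⟨fun _ _ h => Subtype.ext (finsetPreimageMk_injective H (congrArg Subtype.val h)),
      fun s => by
        obtain ⟨t, ht⟩ := (le_stabilizer_iff_mem_range_finsetPreimageMk H).1 s.2.2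
        exact ⟨⟨t, (card_finsetPreimageMk H t).symm.trans (ht ▸ s.2.1)⟩,
          Subtype.ext ht⟩⟩

end Quotient

theorem card_fixedBy_finset_card_eq {G : Type*} [AddCommGroup G] [Fintype G] [DecidableEq G]
    (g : G) (k : ℕ) :
    Nat.card (fixedBy {s : Finset G // s.card = k} g) =
      if addOrderOf g ∣ k then (Nat.card G / addOrderOf g).choose (k / addOrderOf g) else 0 := by
  classical
  have hquot : Nat.card (G ⧸ AddSubgroup.zmultiples g) = Nat.card G / addOrderOf g := by
    rw [AddSubgroup.card_eq_card_quotient_mul_card_addSubgroup (AddSubgroup.zmultiples g),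
      Nat.card_zmultiples, Nat.mul_div_cancel _ (addOrderOf_pos g)]
  rw [Nat.card_congr (fixedByEquivZMultiplesLeStabilizer g k),
    ← Nat.card_congr (finsetPreimageMkEquiv (AddSubgroup.zmultiples g) k), Nat.card_zmultiples,
    card_finset_mul_card_eq (addOrderOf_pos g), hquot]

theorem IsAddCyclic.sum_comp_addOrderOf {G M : Type*} [AddGroup G] [Fintype G] [IsAddCyclic G]
    [AddCommMonoid M] (f : ℕ → M) :
    ∑ g : G, f (addOrderOf g) = ∑ q ∈ (Fintype.card G).divisors, φ q • f q := by
  classical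
  rw [← sum_fiberwise_of_maps_to (g := addOrderOf) (t := (Fintype.card G).divisors)
    fun g _ => mem_divisors.2 ⟨addOrderOf_dvd_card, Fintype.card_ne_zero⟩]
  refine sum_congr rfl fun q hq => ?_
  rw [sum_congr rfl fun g hg => by rw [(mem_filter.1 hg).2], sum_const,
    IsAddCyclic.card_addOrderOf_eq_totient (dvd_of_mem_divisors hq)]

theorem dvd_sum_totient_mul_choose (m : ℕ) [NeZero m] (k : ℕ) :
    m ∣ ∑ q ∈ (m.gcd k).divisors, φ q * (m / q).choose (k / q) := by
  classical
  have hgcd : (m.gcd k).divisors = {q ∈ m.divisors | q ∣ k} := by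
    ext q
    simp [Nat.dvd_gcd_iff, NeZero.ne m]
  have : Fintype (orbitRel.Quotient (ZMod m) {s : Finset (ZMod m) // s.card = k}) :=
    Fintype.ofFinite _
  have hburnside := sum_card_fixedBy_eq_card_orbits_mul_card_addGroup (ZMod m)
    {s : Finset (ZMod m) // s.card = k}
  have hsum : ∑ q ∈ (m.gcd k).divisors, φ q * (m / q).choose (k / q) =
      ∑ g : ZMod m, Fintype.card (fixedBy {s : Finset (ZMod m) // s.card = k} g) := by
    simp only [Fintype.card_eq_nat_card, card_fixedBy_finset_card_eq, Nat.card_zmod]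
    rw [IsAddCyclic.sum_comp_addOrderOf fun q => if q ∣ k then (m / q).choose (k / q) else 0,
      ZMod.card, hgcd, sum_filter]
    simp only [smul_eq_mul, mul_ite, mul_zero]
  rw [hsum, hburnside, ZMod.card]
  exact dvd_mul_left m _

/-- for all `n ≥ 1`, `2n` divides `Σ_{d | n} φ(n/d) C(2d, d)`. -/
theorem stmt_13 (n : ℕ) (hn : 1 ≤ n) :
    2 * n ∣ ∑ d ∈ n.divisors, Nat.totient (n / d) * Nat.choose (2 * d) d := by
  have : NeZero (2 * n) := ⟨by omega⟩
  have h := dvd_sum_totient_mul_choose (2 * n) n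
  rw [Nat.gcd_mul_left_left, ← Nat.sum_div_divisors] at h
  convert h using 2 with d hd
  have hdn := dvd_of_mem_divisors hd
  rw [Nat.mul_div_assoc 2 (Nat.div_dvd_of_dvd hdn), Nat.div_div_self hdn (by omega)]
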